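/- Theorem B (chain rule for plethysms): for all f, g ∈ Λ, D_s(f[g]) = (D_s(f)[g]) ∗ D_s(g). -/

import Mathlib

open MvPolynomial

/-- The ring of symmetric functions in the power-sum model:
`Λ = ℚ[p₁, p₂, …]` with the variable indexed by `n : ℕ+` being the power sum `pₙ`. -/
abbrev Λ : Type := MvPolynomial ℕ+ ℚ

/-- `Λ[1^s, 2^s, …]`: the monoid algebra of the multiplicative monoid `ℕ+` over `Λ`,
with elements the finite sums `Σ_k f_k · k^s`, where `k^s · h^s = (kh)^s`. -/
abbrev ΛS : Type := MonoidAlgebra Λ ℕ+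

/-- `Dₙ = n · ∂/∂pₙ`. -/
noncomputable def Dn (n : ℕ+) : Λ →ₗ[ℚ] Λ :=
  (n : ℚ) • (pderiv n : Derivation ℚ Λ Λ).toLinearMap

/-- `D_s(f) = Σₙ (Dₙ f) · n^s` (only finitely many terms are nonzero). -/
noncomputable def Ds (f : Λ) : ΛS := ∑ᶠ n : ℕ+, MonoidAlgebra.single n (Dn n f)

/-- `ψₙ : Λ → Λ`, the ℚ-algebra endomorphism with `ψₙ(p_k) = p_{nk}`;
`pₙ[g] := ψₙ(g)`. -/
noncomputable def psi (n : ℕ+) : Λ →ₐ[ℚ] Λ := aeval fun k : ℕ+ => X (n * k)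

/-- Plethysm `f[g]`: the image of `f` under the ℚ-algebra homomorphism `Λ → Λ`
sending `pₙ ↦ ψₙ(g) = pₙ[g]`. -/
noncomputable def pleth (f g : Λ) : Λ := aeval (fun n : ℕ+ => psi n g) f

/-- The star product on `Λ[1^s, 2^s, …]`: the bilinear product determined by
`(f·h^s) ∗ (g·k^s) = (f · p_h[g]) · (hk)^s`. -/
noncomputable def star (A B : ΛS) : ΛS :=
  ∑ h ∈ A.coeff.support, ∑ k ∈ B.coeff.support,
    MonoidAlgebra.single (h * k) (A.coeff h * psi h (B.coeff k))

/-- Plethysm extended to `Λ[1^s, 2^s, …]` in the first argument: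
`(Σ_k f_k·k^s)[g] = Σ_k (f_k[g])·k^s`. -/
noncomputable def plethExt (A : ΛS) (g : Λ) : ΛS :=
  ∑ k ∈ A.coeff.support, MonoidAlgebra.single k (pleth (A.coeff k) g)


/-! Comparing coefficients of `m^s`, the theorem says
`Dₘ(f[g]) = Σ_{hk = m} (D_h f)[g] · p_h[D_k g]`. Both sides are additive in `f` and satisfy the
Leibniz rule along the algebra map `f ↦ f[g]`, so it suffices to take `f = p_n`. There the identity
is the commutation rule `D_{nk} ∘ ψ_n = n · ψ_n ∘ D_k`, together with `D_m ∘ ψ_n = 0` for `n ∤ m`,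
since `ψ_n` renames `p_k` to `p_{nk}`. -/

instance PNat.instHasMulAntidiagonal : Finset.HasMulAntidiagonal ℕ+ where
  mulAntidiagonal m := {p ∈ Finset.Icc 1 m ×ˢ Finset.Icc 1 m | p.1 * p.2 = m}
  mem_mulAntidiagonal {m p} := by
    refine ⟨fun h => (Finset.mem_filter.mp h).2, fun h => Finset.mem_filter.mpr ⟨?_, h⟩⟩
    rw [Finset.mem_product, Finset.mem_Icc, Finset.mem_Icc, ← h]
    exact ⟨⟨one_le, le_mul_of_one_le_right' one_le⟩, ⟨one_le, le_mul_of_one_le_left' one_le⟩⟩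

open Finset.HasMulAntidiagonal

lemma MonoidAlgebra.coeff_sum_single {R M : Type*} [Semiring R] {s : Finset M} {F : M → R}
    (hF : ∀ m ∉ s, F m = 0) (m : M) :
    (∑ n ∈ s, MonoidAlgebra.single n (F n)).coeff m = F m := by
  classical
  simp only [MonoidAlgebra.coeff_sum, MonoidAlgebra.coeff_single, Finsupp.finsetSum_apply,
    Finsupp.single_apply, Finset.sum_ite_eq']
  split_ifs with hm
  · rfl
  · exact (hF m hm).symm

lemma Dn_apply (n : ℕ+) (f : Λ) : Dn n f = (n : ℚ) • pderiv n f := rfl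

lemma Dn_mul (n : ℕ+) (u v : Λ) : Dn n (u * v) = Dn n u * v + u * Dn n v := by
  simp only [Dn_apply, pderiv_mul, smul_add, smul_mul_assoc, mul_smul_comm]

lemma Dn_C (n : ℕ+) (a : ℚ) : Dn n (C a) = 0 := by
  rw [Dn_apply, pderiv_C, smul_zero]

lemma Dn_X_self (n : ℕ+) : Dn n (X n) = C (n : ℚ) := by
  rw [Dn_apply, pderiv_X_self, ← C_mul', mul_one]

lemma Dn_X_of_ne {m n : ℕ+} (h : m ≠ n) : Dn m (X n) = 0 := by
  rw [Dn_apply, pderiv_X_of_ne h.symm, smul_zero]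

lemma Dn_eq_zero_of_notMem_vars {n : ℕ+} {f : Λ} (h : n ∉ f.vars) : Dn n f = 0 := by
  rw [Dn_apply, pderiv_eq_zero_of_notMem_vars h, smul_zero]

lemma Ds_eq_sum_vars (f : Λ) : Ds f = ∑ n ∈ f.vars, MonoidAlgebra.single n (Dn n f) := by
  refine finsum_eq_sum_of_support_subset _ fun n hn => ?_
  by_contra hv
  exact hn (by simp only [Dn_eq_zero_of_notMem_vars hv, MonoidAlgebra.single_zero])

lemma Ds_coeff (f : Λ) (m : ℕ+) : (Ds f).coeff m = Dn m f := by
  rw [Ds_eq_sum_vars, MonoidAlgebra.coeff_sum_single fun _ => Dn_eq_zero_of_notMem_vars]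

lemma pleth_zero (g : Λ) : pleth 0 g = 0 := map_zero _

lemma pleth_add (u v g : Λ) : pleth (u + v) g = pleth u g + pleth v g := map_add _ _ _

lemma pleth_mul (u v g : Λ) : pleth (u * v) g = pleth u g * pleth v g := map_mul _ _ _

lemma pleth_C (a : ℚ) (g : Λ) : pleth (C a) g = C a := aeval_C _ _

lemma pleth_X (n : ℕ+) (g : Λ) : pleth (X n) g = psi n g := aeval_X _ _

lemma plethExt_coeff (A : ΛS) (g : Λ) (k : ℕ+) :
    (plethExt A g).coeff k = pleth (A.coeff k) g := by
  refine MonoidAlgebra.coeff_sum_single (fun n hn => ?_) k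
  rw [Finsupp.notMem_support_iff.mp hn, pleth_zero]

lemma star_coeff (A B : ΛS) (m : ℕ+) :
    (star A B).coeff m = ∑ p ∈ mulAntidiagonal m, A.coeff p.1 * psi p.1 (B.coeff p.2) := by
  classical
  rw [_root_.star, ← Finset.sum_product', MonoidAlgebra.coeff_sum, Finsupp.finsetSum_apply]
  simp only [MonoidAlgebra.coeff_single, Finsupp.single_apply]
  rw [← Finset.sum_filter]
  refine Finset.sum_subset (fun p hp => mem_mulAntidiagonal.mpr (Finset.mem_filter.mp hp).2)
    fun p hm hp => ?_
  have hzero : p.1 ∉ A.coeff.support ∨ p.2 ∉ B.coeff.support := by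
    rw [← not_and_or, ← Finset.mem_product]
    exact fun h => hp (Finset.mem_filter.mpr ⟨h, mem_mulAntidiagonal.mp hm⟩)
  rcases hzero with h | h
  · rw [Finsupp.notMem_support_iff.mp h, zero_mul]
  · rw [Finsupp.notMem_support_iff.mp h, map_zero, mul_zero]

lemma psi_eq_rename (n : ℕ+) : psi n = rename (n * ·) := by
  ext k
  rw [psi, aeval_X, rename_X]

lemma Dn_psi_mul (n k : ℕ+) (g : Λ) : Dn (n * k) (psi n g) = C (n : ℚ) * psi n (Dn k g) := by
  have hinj : Function.Injective (n * ·) := fun _ _ h => mul_left_cancel h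
  rw [psi_eq_rename, Dn_apply, pderiv_rename hinj, Dn_apply, map_smul, C_mul', smul_smul]
  rw [PNat.mul_coe, Nat.cast_mul, mul_comm]

lemma Dn_psi_of_not_dvd {m n : ℕ+} (h : ¬ n ∣ m) (g : Λ) : Dn m (psi n g) = 0 := by
  refine Dn_eq_zero_of_notMem_vars fun hm => ?_
  rw [psi_eq_rename] at hm
  obtain ⟨k, -, hk⟩ := mem_vars_rename _ _ hm
  exact h ⟨k, hk.symm⟩

lemma Dn_pleth_X (m n : ℕ+) (g : Λ) :
    Dn m (pleth (X n) g) =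
      ∑ p ∈ mulAntidiagonal m, pleth (Dn p.1 (X n)) g * psi p.1 (Dn p.2 g) := by
  have hterm : ∀ p ∈ mulAntidiagonal m, p.1 ≠ n →
      pleth (Dn p.1 (X n)) g * psi p.1 (Dn p.2 g) = 0 :=
    fun p _ hp => by rw [Dn_X_of_ne hp, pleth_zero, zero_mul]
  rw [pleth_X]
  by_cases hdvd : n ∣ m
  · obtain ⟨k, rfl⟩ := hdvd
    have hnk : (n, k) ∈ mulAntidiagonal (n * k) := mem_mulAntidiagonal.mpr rfl
    rw [Finset.sum_eq_single_of_mem _ hnk fun p hp hne =>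
      hterm p hp fun h => hne ((mulAntidiagonal_congr hp hnk).mpr h)]
    rw [Dn_X_self, pleth_C, Dn_psi_mul]
  · rw [Dn_psi_of_not_dvd hdvd, Finset.sum_eq_zero fun p hp => hterm p hp fun h => hdvd ?_]
    exact ⟨p.2, by rw [← h, mem_mulAntidiagonal.mp hp]⟩

theorem Dn_pleth (m : ℕ+) (f g : Λ) :
    Dn m (pleth f g) = ∑ p ∈ mulAntidiagonal m, pleth (Dn p.1 f) g * psi p.1 (Dn p.2 g) := by
  induction f using MvPolynomial.induction_on with
  | C a => simp only [pleth_C, Dn_C, pleth_zero, zero_mul, Finset.sum_const_zero]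
  | add u v hu hv =>
    simp only [pleth_add, map_add, hu, hv, add_mul, Finset.sum_add_distrib]
  | mul_X u n hu =>
    rw [pleth_mul, Dn_mul, hu, Dn_pleth_X, Finset.sum_mul, Finset.mul_sum, ← Finset.sum_add_distrib]
    refine Finset.sum_congr rfl fun p _ => ?_
    rw [Dn_mul, pleth_add, pleth_mul, pleth_mul]
    ring

/-- Theorem B (chain rule for plethysms): `D_s(f[g]) = (D_s(f)[g]) ∗ D_s(g)`. -/
theorem Ds_pleth (f g : Λ) :
    Ds (pleth f g) = star (plethExt (Ds f) g) (Ds g) := by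
  refine MonoidAlgebra.ext (Finsupp.ext fun m => ?_)
  rw [Ds_coeff, star_coeff, Dn_pleth]
  simp only [plethExt_coeff, Ds_coeff]
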